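/- arXiv:2511.16180 — 3 statements merged into one kernel-verified Lean document; each statement's English description precedes it below -/
import Mathlib

section
/- Centroid-value reconstruction: for any u_h in the approximation space V_k(T), the value at the centroid satisfies u_h(x_T) = (20/9)·ū − (1/9)(u_h(σ_1)+u_h(σ_2)+u_h(σ_3)) − (8/27)(u_h(σ_4)+u_h(σ_5)+u_h(σ_6)), where ū = (1/|T|)∫_T u_h dx. Moreover the coefficients −1/9 (×3), −8/27 (×3), 20/9 sum to 1. -/
open MeasureTheory Finset

noncomputable section

def T : Set (ℝ × ℝ) := {p | 0 ≤ p.1 ∧ 0 ≤ p.2 ∧ p.1 + p.2 ≤ 1}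

def lam : Fin 3 → ℝ × ℝ → ℝ
  | 0 => fun p => 1 - p.1 - p.2
  | 1 => fun p => p.1
  | 2 => fun p => p.2

def phibar (p : ℝ × ℝ) : ℝ := 60 * lam 0 p * lam 1 p * lam 2 p

def phi : Fin 7 → ℝ × ℝ → ℝ
  | 0 => fun p => lam 0 p * (2 * lam 0 p - 1)
  | 1 => fun p => lam 1 p * (2 * lam 1 p - 1)
  | 2 => fun p => lam 2 p * (2 * lam 2 p - 1)
  | 3 => fun p => 4 * lam 0 p * lam 1 p - (1/3) * phibar p
  | 4 => fun p => 4 * lam 1 p * lam 2 p - (1/3) * phibar p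
  | 5 => fun p => 4 * lam 2 p * lam 0 p - (1/3) * phibar p
  | 6 => phibar

def node : Fin 6 → ℝ × ℝ
  | 0 => (0, 0)
  | 1 => (1, 0)
  | 2 => (0, 1)
  | 3 => (1/2, 0)
  | 4 => (1/2, 1/2)
  | 5 => (0, 1/2)


lemma poly_int (a A B C D E : ℝ) :
    ∫ t in (0:ℝ)..a, (A + B*t + C*t^2 + D*t^3 + E*t^4)
      = A*a + B*a^2/2 + C*a^3/3 + D*a^4/4 + E*a^5/5 := by
  have key : ∀ t : ℝ, HasDerivAt
      (fun t : ℝ => A*t + B*t^2/2 + C*t^3/3 + D*t^4/4 + E*t^5/5)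
      (A + B*t + C*t^2 + D*t^3 + E*t^4) t := by
    intro t
    have h : HasDerivAt
        (fun t : ℝ => A*t + B*t^2/2 + C*t^3/3 + D*t^4/4 + E*t^5/5)
        (A*1 + B*(↑2*t^1)/2 + C*(↑3*t^2)/3 + D*(↑4*t^3)/4 + E*(↑5*t^4)/5) t := by
      exact (((((hasDerivAt_id t).const_mul A).add
        (((hasDerivAt_pow 2 t).const_mul B).div_const 2)).add
        (((hasDerivAt_pow 3 t).const_mul C).div_const 3)).add
        (((hasDerivAt_pow 4 t).const_mul D).div_const 4)).add
        (((hasDerivAt_pow 5 t).const_mul E).div_const 5)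
    convert h using 1
    ring
  rw [intervalIntegral.integral_eq_sub_of_hasDerivAt (fun t _ => key t)
    ((Continuous.intervalIntegrable (by fun_prop) 0 a))]
  ring

lemma tri_integral (f : ℝ × ℝ → ℝ) (hf : Continuous f) :
    ∫ p in T, f p = ∫ x in (0:ℝ)..1, ∫ y in (0:ℝ)..(1-x), f (x, y) := by
  have hTm : MeasurableSet T := by
    have hT : T = {p : ℝ × ℝ | 0 ≤ p.1} ∩ ({p | 0 ≤ p.2} ∩ {p | p.1 + p.2 ≤ 1}) := by
      ext p; simp [T, and_assoc]
    rw [hT]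
    exact (measurableSet_le measurable_const measurable_fst).inter
      ((measurableSet_le measurable_const measurable_snd).inter
       (measurableSet_le (measurable_fst.add measurable_snd) measurable_const))
  have hTcl : IsClosed T := by
    have hT : T = {p : ℝ × ℝ | 0 ≤ p.1} ∩ ({p | 0 ≤ p.2} ∩ {p | p.1 + p.2 ≤ 1}) := by
      ext p; simp [T, and_assoc]
    rw [hT]
    exact (isClosed_le continuous_const continuous_fst).inter
      ((isClosed_le continuous_const continuous_snd).inter
       (isClosed_le (continuous_fst.add continuous_snd) continuous_const))
  have hsub : T ⊆ Set.Icc ((0:ℝ), (0:ℝ)) (1, 1) := by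
    rintro ⟨a, b⟩ ⟨h1, h2, h3⟩
    simp only [Set.mem_Icc, Prod.mk_le_mk]
    exact ⟨⟨h1, h2⟩, ⟨by linarith, by linarith⟩⟩
  have hTc : IsCompact T := isCompact_Icc.of_isClosed_subset hTcl hsub
  have hint : IntegrableOn f T := hf.continuousOn.integrableOn_compact hTc
  rw [← MeasureTheory.integral_indicator hTm]
  have hind : Integrable (T.indicator f) ((volume : Measure ℝ).prod volume) := by
    rw [← MeasureTheory.Measure.volume_eq_prod, integrable_indicator_iff hTm]
    exact hint
  rw [MeasureTheory.Measure.volume_eq_prod, MeasureTheory.integral_prod _ hind]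
  have hgg : ∀ x : ℝ, (∫ y, T.indicator f (x, y))
      = Set.indicator (Set.Icc (0:ℝ) 1) (fun x => ∫ y in (0:ℝ)..(1-x), f (x, y)) x := by
    intro x
    by_cases hx : x ∈ Set.Icc (0:ℝ) 1
    · obtain ⟨hx0, hx1⟩ := Set.mem_Icc.mp hx
      rw [Set.indicator_of_mem hx]
      have heq : (fun y => T.indicator f (x, y))
          = Set.indicator (Set.Icc (0:ℝ) (1-x)) (fun y => f (x, y)) := by
        funext y
        simp only [Set.indicator_apply, Set.mem_Icc, T, Set.mem_setOf_eq]
        by_cases hy : 0 ≤ y ∧ y ≤ 1 - x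
        · rw [if_pos ⟨hx0, hy.1, by linarith [hy.2]⟩, if_pos hy]
        · rw [if_neg, if_neg hy]
          rintro ⟨_, h2, h3⟩
          exact hy ⟨h2, by linarith⟩
      rw [heq, MeasureTheory.integral_indicator measurableSet_Icc,
        MeasureTheory.integral_Icc_eq_integral_Ioc,
        ← intervalIntegral.integral_of_le (by linarith : (0:ℝ) ≤ 1 - x)]
    · rw [Set.indicator_of_notMem hx]
      simp only [Set.mem_Icc, not_and_or, not_le] at hx
      have hz : ∀ y : ℝ, T.indicator f (x, y) = 0 := by
        intro y
        apply Set.indicator_of_notMem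
        rintro ⟨h1, h2, h3⟩
        rcases hx with h | h <;> linarith
      simp [hz]
  rw [MeasureTheory.integral_congr_ae (Filter.Eventually.of_forall hgg),
    MeasureTheory.integral_indicator measurableSet_Icc,
    MeasureTheory.integral_Icc_eq_integral_Ioc,
    ← intervalIntegral.integral_of_le (zero_le_one)]

/-- Centroid-value reconstruction: for any `u_h ∈ V_k(T)`,
`u_h(x_T) = (20/9) ū − (1/9) Σ vertex values − (8/27) Σ midpoint values`,
where `ū` is the mean of `u_h` over `T`; moreover the coefficients sum to `1`. -/
theorem centroid_reconstruction (c : Fin 7 → ℝ)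
    (uh : ℝ × ℝ → ℝ) (huh : uh = fun p => ∑ j : Fin 7, c j * phi j p)
    (ubar : ℝ) (hubar : ubar = (1 / ((1 : ℝ) / 2)) * ∫ p in T, uh p) :
    uh (1/3, 1/3) = (20/9) * ubar
      - (1/9) * (uh (node 0) + uh (node 1) + uh (node 2))
      - (8/27) * (uh (node 3) + uh (node 4) + uh (node 5)) ∧
    (3 : ℝ) * (-(1/9)) + 3 * (-(8/27)) + 20/9 = 1 := by
  have hcont : Continuous (fun p : ℝ × ℝ => ∑ j : Fin 7, c j * phi j p) := by
    apply continuous_finset_sum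
    intro j _
    fin_cases j <;> simp only [phi, phibar, lam] <;> fun_prop
  have hI : (∫ p in T, uh p) = c 6 / 2 := by
    simp only [huh]
    rw [tri_integral _ hcont]
    have hin : ∀ x : ℝ, (∫ y in (0:ℝ)..(1-x), ∑ j : Fin 7, c j * phi j (x, y))
        = ((1/6) * c 0 + (1/6) * c 2 + (2/3) * c 5)
        + ((-1) * c 0 + (-1) * c 1 + (-1) * c 2 + (-4/3) * c 3 + (-4/3) * c 4
           + (-16/3) * c 5 + 10 * c 6) * x
        + ((3/2) * c 0 + 3 * c 1 + (3/2) * c 2 + 6 * c 3 + 6 * c 4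
           + 12 * c 5 + (-30) * c 6) * x^2
        + ((-2/3) * c 0 + (-2) * c 1 + (-2/3) * c 2 + (-8) * c 3 + (-8) * c 4
           + (-32/3) * c 5 + 30 * c 6) * x^3
        + ((10/3) * c 3 + (10/3) * c 4 + (10/3) * c 5 + (-10) * c 6) * x^4 := by
      intro x
      have heq : (fun y => ∑ j : Fin 7, c j * phi j (x, y))
          = fun y => (c 0 * (1 + (-3)*x + 2*x^2) + c 1 * ((-1)*x + 2*x^2) + c 3 * (4*x + (-4)*x^2))
          + (c 0 * ((-3) + 4*x) + c 2 * (-1) + c 3 * ((-24)*x + 20*x^2)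
             + c 4 * ((-16)*x + 20*x^2) + c 5 * (4 + (-24)*x + 20*x^2)
             + c 6 * (60*x + (-60)*x^2)) * y
          + (c 0 * 2 + c 2 * 2 + c 3 * (20*x) + c 4 * (20*x)
             + c 5 * ((-4) + 20*x) + c 6 * ((-60)*x)) * y^2
          + (0:ℝ) * y^3 + (0:ℝ) * y^4 := by
        funext y
        simp only [Fin.sum_univ_seven, phi, phibar, lam]
        ring
      rw [show (∫ y in (0:ℝ)..(1-x), ∑ j : Fin 7, c j * phi j (x, y))
          = ∫ y in (0:ℝ)..(1-x), ((c 0 * (1 + (-3)*x + 2*x^2) + c 1 * ((-1)*x + 2*x^2) + c 3 * (4*x + (-4)*x^2))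
          + (c 0 * ((-3) + 4*x) + c 2 * (-1) + c 3 * ((-24)*x + 20*x^2)
             + c 4 * ((-16)*x + 20*x^2) + c 5 * (4 + (-24)*x + 20*x^2)
             + c 6 * (60*x + (-60)*x^2)) * y
          + (c 0 * 2 + c 2 * 2 + c 3 * (20*x) + c 4 * (20*x)
             + c 5 * ((-4) + 20*x) + c 6 * ((-60)*x)) * y^2
          + (0:ℝ) * y^3 + (0:ℝ) * y^4) from by rw [← heq],
        poly_int]
      ring
    rw [show (∫ x in (0:ℝ)..1, ∫ y in (0:ℝ)..(1-x), ∑ j : Fin 7, c j * phi j (x, y))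
        = ∫ x in (0:ℝ)..1, (((1/6) * c 0 + (1/6) * c 2 + (2/3) * c 5)
        + ((-1) * c 0 + (-1) * c 1 + (-1) * c 2 + (-4/3) * c 3 + (-4/3) * c 4
           + (-16/3) * c 5 + 10 * c 6) * x
        + ((3/2) * c 0 + 3 * c 1 + (3/2) * c 2 + 6 * c 3 + 6 * c 4
           + 12 * c 5 + (-30) * c 6) * x^2
        + ((-2/3) * c 0 + (-2) * c 1 + (-2/3) * c 2 + (-8) * c 3 + (-8) * c 4
           + (-32/3) * c 5 + 30 * c 6) * x^3
        + ((10/3) * c 3 + (10/3) * c 4 + (10/3) * c 5 + (-10) * c 6) * x^4) from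
      intervalIntegral.integral_congr (fun x _ => hin x), poly_int]
    ring
  refine ⟨?_, by norm_num⟩
  rw [hubar, hI]
  simp only [huh, Fin.sum_univ_seven, phi, phibar, lam, node]
  norm_num
  ring
end
end

section
/- The explicit dual basis function θ_{σ_4} = −(65/6)λ_1(2λ_1−1) − (65/6)λ_2(2λ_2−1) − (10/3)λ_3(2λ_3−1) − 490λ_1λ_2λ_3 + (215/3)λ_1λ_2 + (115/6)λ_2λ_3 + (115/6)λ_3λ_1 satisfies the Riesz property for the midpoint evaluation: for every u_h ∈ V_k(T), (1/|T|)∫_T θ_{σ_4} u_h dx = u_h(σ_4), where σ_4 is the midpoint of the edge [σ_1, σ_2] (barycentric point (1/2, 1/2, 0)). -/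
open MeasureTheory Finset

noncomputable section

/-- The explicit dual basis function `θ_{σ₄}` associated with the midpoint
`σ₄` of the edge `[σ₁, σ₂]` (barycentric point `(1/2, 1/2, 0)`, i.e. `(1/2, 0)`). -/
def thetaSigma4 (p : ℝ × ℝ) : ℝ :=
  -(65/6) * lam 0 p * (2 * lam 0 p - 1) - (65/6) * lam 1 p * (2 * lam 1 p - 1)
    - (10/3) * lam 2 p * (2 * lam 2 p - 1) - 490 * lam 0 p * lam 1 p * lam 2 p
    + (215/3) * lam 0 p * lam 1 p + (115/6) * lam 1 p * lam 2 p
    + (115/6) * lam 2 p * lam 0 p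

/-!
Both sides are linear in `u_h`, and in monomial coordinates `V_k(T) = P₂ ⊕ span(x²y + xy²)` (the
bubble is `xy - x²y - xy²`), so it suffices to check the identity on `1, x, y, x², xy, y²` and
`x²y + xy²`. Expanded in monomials, `θ_{σ₄}` is a cubic, so each side becomes a combination of the
moments `∫_T xᵃ yᵇ = a! b! / (a + b + 2)!`, which follow from Fubini and the Beta integral
`∫₀¹ xᵃ (1 - x)ᵇ dx = a! b! / (a + b + 1)!`.
-/

open scoped Nat

lemma measurableSet_T : MeasurableSet T :=
  (measurableSet_le measurable_const measurable_fst).inter <|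
    (measurableSet_le measurable_const measurable_snd).inter <|
      measurableSet_le (measurable_fst.add measurable_snd) measurable_const

lemma isCompact_T : IsCompact T := by
  have hclosed : IsClosed T :=
    (isClosed_le continuous_const continuous_fst).inter <|
      (isClosed_le continuous_const continuous_snd).inter <|
        isClosed_le (continuous_fst.add continuous_snd) continuous_const
  refine (isCompact_Icc (a := ((0 : ℝ), (0 : ℝ))) (b := (1, 1))).of_isClosed_subset hclosed ?_
  rintro ⟨x, y⟩ ⟨hx, hy, hxy⟩
  exact ⟨⟨hx, hy⟩, by simp only; linarith, by simp only; linarith⟩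

lemma integrableOn_T_of_continuous {f : ℝ × ℝ → ℝ} (hf : Continuous f) : IntegrableOn f T :=
  hf.continuousOn.integrableOn_compact isCompact_T

lemma integral_indicator_T_slice (f : ℝ × ℝ → ℝ) (x : ℝ) :
    ∫ y, T.indicator f (x, y) =
      (Set.Icc 0 1).indicator (fun x => ∫ y in (0 : ℝ)..(1 - x), f (x, y)) x := by
  by_cases hx : x ∈ Set.Icc (0 : ℝ) 1
  · have hslice : (fun y => T.indicator f (x, y)) =
        (Set.Icc 0 (1 - x)).indicator (fun y => f (x, y)) := by
      ext y
      simp only [Set.indicator, T, Set.mem_ofPred_eq, Set.mem_Icc]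
      congr 1
      exact propext ⟨fun ⟨_, hy, hxy⟩ => ⟨hy, by linarith⟩,
        fun ⟨hy, hxy⟩ => ⟨hx.1, hy, by linarith⟩⟩
    rw [Set.indicator_of_mem hx, hslice, integral_indicator measurableSet_Icc,
      intervalIntegral.integral_of_le (by linarith [hx.2]), integral_Icc_eq_integral_Ioc]
  · have hzero : ∀ y, T.indicator f (x, y) = 0 := fun y =>
      Set.indicator_of_notMem (fun h : (x, y) ∈ T => hx ⟨h.1, by linarith [h.2.1, h.2.2]⟩) f
    simp only [hzero, integral_zero, Set.indicator_of_notMem hx]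

theorem setIntegral_T_eq_intervalIntegral {f : ℝ × ℝ → ℝ} (hf : IntegrableOn f T) :
    ∫ p in T, f p = ∫ x in (0 : ℝ)..1, ∫ y in (0 : ℝ)..(1 - x), f (x, y) := by
  have hint : Integrable (T.indicator f) (volume.prod volume) := by
    rw [← Measure.volume_eq_prod]
    exact hf.integrable_indicator measurableSet_T
  rw [← integral_indicator measurableSet_T, Measure.volume_eq_prod, integral_prod _ hint]
  simp only [integral_indicator_T_slice]
  rw [integral_indicator measurableSet_Icc, integral_Icc_eq_integral_Ioc,
    ← intervalIntegral.integral_of_le zero_le_one]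

theorem integral_pow_mul_one_sub_pow (a b : ℕ) :
    ∫ x in (0 : ℝ)..1, x ^ a * (1 - x) ^ b = a ! * b ! / (a + b + 1)! := by
  induction b generalizing a with
  | zero =>
    simp only [pow_zero, mul_one, integral_pow, Nat.factorial_zero, add_zero, Nat.factorial_succ]
    push_cast
    field_simp
    simp
  | succ b ih =>
    have hsplit : ∫ x in (0 : ℝ)..1, x ^ a * (1 - x) ^ (b + 1) =
        (∫ x in (0 : ℝ)..1, x ^ a * (1 - x) ^ b)
          - ∫ x in (0 : ℝ)..1, x ^ (a + 1) * (1 - x) ^ b := by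
      rw [← intervalIntegral.integral_sub (by apply Continuous.intervalIntegrable; fun_prop)
        (by apply Continuous.intervalIntegrable; fun_prop)]
      congr 1
      ext x
      ring
    rw [hsplit, ih, ih, show a + 1 + b + 1 = a + b + 1 + 1 by ring,
      show a + (b + 1) + 1 = a + b + 1 + 1 by ring, Nat.factorial_succ (a + b + 1),
      Nat.factorial_succ a, Nat.factorial_succ b]
    push_cast
    field_simp
    ring

def triangleMoment (a b : ℕ) : ℝ := a ! * b ! / (a + b + 2)!

theorem setIntegral_T_monomial (a b : ℕ) :
    ∫ p in T, p.1 ^ a * p.2 ^ b = triangleMoment a b := by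
  have hinner : ∀ x : ℝ,
      ∫ y in (0 : ℝ)..(1 - x), x ^ a * y ^ b = x ^ a * (1 - x) ^ (b + 1) / (b + 1) := by
    intro x
    rw [intervalIntegral.integral_const_mul, integral_pow, zero_pow (Nat.succ_ne_zero b)]
    ring
  rw [setIntegral_T_eq_intervalIntegral (integrableOn_T_of_continuous (by fun_prop))]
  simp only [hinner]
  rw [intervalIntegral.integral_div, integral_pow_mul_one_sub_pow, triangleMoment,
    show a + (b + 1) + 1 = a + b + 2 by ring, Nat.factorial_succ b]
  push_cast
  field_simp

lemma thetaSigma4_eq (p : ℝ × ℝ) :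
    thetaSigma4 p = -65 / 6 + 115 * p.1 + 55 * p.2 - 115 * p.1 ^ 2 - 605 * (p.1 * p.2)
      - 95 / 2 * p.2 ^ 2 + 490 * (p.1 ^ 2 * p.2 + p.1 * p.2 ^ 2) := by
  simp only [thetaSigma4, lam]
  ring

@[fun_prop]
lemma continuous_thetaSigma4 : Continuous thetaSigma4 := by
  simp only [funext thetaSigma4_eq]
  fun_prop

theorem setIntegral_T_thetaSigma4_mul_monomial (a b : ℕ) :
    ∫ p in T, thetaSigma4 p * (p.1 ^ a * p.2 ^ b) =
      -65 / 6 * triangleMoment a b + 115 * triangleMoment (a + 1) b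
        + 55 * triangleMoment a (b + 1) - 115 * triangleMoment (a + 2) b
        - 605 * triangleMoment (a + 1) (b + 1) - 95 / 2 * triangleMoment a (b + 2)
        + 490 * (triangleMoment (a + 2) (b + 1) + triangleMoment (a + 1) (b + 2)) := by
  have hexpand : (fun p : ℝ × ℝ => thetaSigma4 p * (p.1 ^ a * p.2 ^ b)) = fun p =>
      -65 / 6 * (p.1 ^ a * p.2 ^ b) + 115 * (p.1 ^ (a + 1) * p.2 ^ b)
        + 55 * (p.1 ^ a * p.2 ^ (b + 1)) - 115 * (p.1 ^ (a + 2) * p.2 ^ b)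
        - 605 * (p.1 ^ (a + 1) * p.2 ^ (b + 1)) - 95 / 2 * (p.1 ^ a * p.2 ^ (b + 2))
        + 490 * (p.1 ^ (a + 2) * p.2 ^ (b + 1) + p.1 ^ (a + 1) * p.2 ^ (b + 2)) := by
    ext p
    rw [thetaSigma4_eq]
    ring
  rw [hexpand]
  simp (disch := (rw [← IntegrableOn]; exact integrableOn_T_of_continuous (by fun_prop))) only
    [integral_add, integral_sub, integral_const_mul, setIntegral_T_monomial]

theorem two_mul_setIntegral_thetaSigma4_mul_eq_apply {u : ℝ × ℝ → ℝ} (α₀ α₁ α₂ α₁₁ α₁₂ α₂₂ γ : ℝ)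
    (hu : ∀ p, u p = α₀ + α₁ * p.1 + α₂ * p.2 + α₁₁ * p.1 ^ 2 + α₁₂ * (p.1 * p.2)
      + α₂₂ * p.2 ^ 2 + γ * (p.1 ^ 2 * p.2 + p.1 * p.2 ^ 2)) :
    2 * ∫ p in T, thetaSigma4 p * u p = u (1 / 2, 0) := by
  have hexpand : (fun p : ℝ × ℝ => thetaSigma4 p * u p) = fun p =>
      α₀ * (thetaSigma4 p * (p.1 ^ 0 * p.2 ^ 0)) + α₁ * (thetaSigma4 p * (p.1 ^ 1 * p.2 ^ 0))
        + α₂ * (thetaSigma4 p * (p.1 ^ 0 * p.2 ^ 1)) + α₁₁ * (thetaSigma4 p * (p.1 ^ 2 * p.2 ^ 0))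
        + α₁₂ * (thetaSigma4 p * (p.1 ^ 1 * p.2 ^ 1)) + α₂₂ * (thetaSigma4 p * (p.1 ^ 0 * p.2 ^ 2))
        + γ * (thetaSigma4 p * (p.1 ^ 2 * p.2 ^ 1) + thetaSigma4 p * (p.1 ^ 1 * p.2 ^ 2)) := by
    ext p
    rw [hu]
    ring
  rw [hexpand]
  simp (disch := (rw [← IntegrableOn]; exact integrableOn_T_of_continuous (by fun_prop))) only
    [integral_add, integral_const_mul, setIntegral_T_thetaSigma4_mul_monomial]
  rw [hu]
  -- `2 ∫_T θ xᵃ yᵇ = (1/2)ᵃ 0ᵇ` for `a + b ≤ 2`, and the two cubic moments cancel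
  norm_num [triangleMoment, Nat.factorial]
  ring

/-- Riesz property of `θ_{σ₄}`: for every `u_h ∈ V_k(T)`,
`(1/|T|) ∫_T θ_{σ₄} u_h = u_h(σ₄)`. -/
theorem riesz_midpoint (c : Fin 7 → ℝ)
    (uh : ℝ × ℝ → ℝ) (huh : uh = fun p => ∑ j : Fin 7, c j * phi j p) :
    (1 / ((1 : ℝ) / 2)) * ∫ p in T, thetaSigma4 p * uh p = uh (1/2, 0) := by
  rw [one_div_one_div]
  refine two_mul_setIntegral_thetaSigma4_mul_eq_apply (c 0) (-3 * c 0 - c 1 + 4 * c 3)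
    (-3 * c 0 - c 2 + 4 * c 5) (2 * c 0 + 2 * c 1 - 4 * c 3)
    (4 * c 0 - 24 * c 3 - 16 * c 4 - 24 * c 5 + 60 * c 6) (2 * c 0 + 2 * c 2 - 4 * c 5)
    (20 * (c 3 + c 4 + c 5) - 60 * c 6) fun p => ?_
  simp only [huh, Fin.sum_univ_seven, phi, phibar, lam]
  ring
end
end

section
/- GQL characterization of the Euler invariant domain: a state u = (ρ, m, E) ∈ ℝ × ℝ² × ℝ has ρ > 0 and internal energy ε = E − |m|²/(2ρ) > 0 if and only if u·n* > 0 for all n* ∈ N, where N = {(1, 0, 0, 0)} ∪ {(|ν|²/2, −ν, 1) : ν ∈ ℝ²}. -/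
/-- GQL characterization of the Euler invariant domain: a state
`u = (ρ, m₁, m₂, E)` has `ρ > 0` and positive internal energy
`E − |m|²/(2ρ) > 0` iff `u · n* > 0` for every `n*` in the GQL set
`N = {(1,0,0,0)} ∪ {(|ν|²/2, −ν₁, −ν₂, 1) : ν ∈ ℝ²}`. -/
theorem gql_characterization (ρ m₁ m₂ E : ℝ) :
    (0 < ρ ∧ 0 < E - (m₁^2 + m₂^2) / (2 * ρ)) ↔
    (∀ n₁ n₂ n₃ n₄ : ℝ,
      ((n₁, n₂, n₃, n₄) = ((1 : ℝ), (0 : ℝ), (0 : ℝ), (0 : ℝ)) ∨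
        ∃ ν₁ ν₂ : ℝ, (n₁, n₂, n₃, n₄) = ((ν₁^2 + ν₂^2) / 2, -ν₁, -ν₂, (1 : ℝ))) →
      0 < ρ * n₁ + m₁ * n₂ + m₂ * n₃ + E * n₄) := by
  constructor
  · rintro ⟨hρ, hε⟩ n₁ n₂ n₃ n₄ (h | ⟨ν₁, ν₂, h⟩)
    · simp only [Prod.mk.injEq] at h
      obtain ⟨h1, h2, h3, h4⟩ := h
      subst h1; subst h2; subst h3; subst h4
      simpa using hρ
    · simp only [Prod.mk.injEq] at h
      obtain ⟨h1, h2, h3, h4⟩ := h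
      subst h1; subst h2; subst h3; subst h4
      have key : ρ * ((ν₁^2 + ν₂^2) / 2) + m₁ * (-ν₁) + m₂ * (-ν₂) + E * 1
          = (E - (m₁^2 + m₂^2) / (2 * ρ))
            + ((ρ * ν₁ - m₁)^2 + (ρ * ν₂ - m₂)^2) / (2 * ρ) := by
        field_simp
        ring
      rw [key]
      have h2 : 0 ≤ ((ρ * ν₁ - m₁)^2 + (ρ * ν₂ - m₂)^2) / (2 * ρ) := by
        apply div_nonneg (by positivity) (by linarith)
      linarith
  · intro h
    have hρ : 0 < ρ := by simpa using h 1 0 0 0 (Or.inl rfl)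
    refine ⟨hρ, ?_⟩
    have := h (((m₁/ρ)^2 + (m₂/ρ)^2) / 2) (-(m₁/ρ)) (-(m₂/ρ)) 1
      (Or.inr ⟨m₁/ρ, m₂/ρ, rfl⟩)
    have key : ρ * (((m₁/ρ)^2 + (m₂/ρ)^2) / 2) + m₁ * (-(m₁/ρ)) + m₂ * (-(m₂/ρ)) + E * 1
        = E - (m₁^2 + m₂^2) / (2 * ρ) := by
      field_simp
      ring
    linarith [key ▸ this]
end
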